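/- Let M be a finite Markov chain, K a nontrivial strongly connected component of M, and M_K the Markov chain on K ∪ Out_K where transitions within K follow M and all states of Out_K are absorbing. Then for any s ∈ K, with probability 1 a path of M_K starting at s eventually either reaches Out_K or, if Out_K = ∅, remains in K forever; moreover the probabilities of reaching the distinct output states from s sum to the probability of ever leaving K, and when Out_K ≠ ∅ and every state of K has in M positive probability of exiting K eventually, these probabilities sum to 1. -/

import Mathlib

open scoped ENNReal Classical
open MeasureTheory

namespace CE

variable {S : Type}

/-- Positive-probability transition (edge of the underlying digraph). -/
def edge (P : S → S → ℝ≥0∞) (s t : S) : Prop := 0 < P s t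

/-- Finite path of the Markov chain with transition function `P`, starting at `s`. -/
def IsFPath (P : S → S → ℝ≥0∞) (s : S) (σ : List S) : Prop :=
  σ.head? = some s ∧ σ.Chain' (edge P)

/-- Infinite path of the Markov chain with transition function `P`, starting at `s`. -/
def IsPath (P : S → S → ℝ≥0∞) (s : S) (ω : ℕ → S) : Prop :=
  ω 0 = s ∧ ∀ n, edge P (ω n) (ω (n + 1))

/-- Reachability in the underlying digraph. -/
def Reach (P : S → S → ℝ≥0∞) : S → S → Prop :=
  Relation.ReflTransGen (edge P)

/-- Same strongly connected component. -/
def sccRel (P : S → S → ℝ≥0∞) (s t : S) : Prop :=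
  Reach P s t ∧ Reach P t s

/-- `s` belongs to a nontrivial SCC (more than one state, or a self-loop). -/
def nontriv (P : S → S → ℝ≥0∞) (s : S) : Prop :=
  (∃ t, t ≠ s ∧ sccRel P s t) ∨ edge P s s

/-- Cylinder (cone) of a finite path. -/
def Cyl (ρ : List S) : Set (ℕ → S) := {ω | ∀ i : Fin ρ.length, ω i.1 = ρ.get i}

/-- Finite paths from `s` reaching `A` exactly at their last state. -/
def FReach (P : S → S → ℝ≥0∞) (s : S) (A : Set S) : Set (List S) :=
  {σ | IsFPath P s σ ∧ (∃ h : σ ≠ [], σ.getLast h ∈ A) ∧ ∀ x ∈ σ.dropLast, x ∉ A}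

/-- Infinite sequences that eventually visit `A`. -/
def ReachSet (A : Set S) : Set (ℕ → S) := {ω | ∃ i, ω i ∈ A}

/-- Product of transition probabilities along a finite path. -/
noncomputable def cylProb (P : S → S → ℝ≥0∞) (d : S) (ρ : List S) : ℝ≥0∞ :=
  ∏ i ∈ Finset.range (ρ.length - 1), P (ρ.getD i d) (ρ.getD (i + 1) d)

/-- `σ ⪯_f ω`: subsequence embedding satisfying freshness and inertia w.r.t. `r`. -/
structure Embeds (r : S → S → Prop) (σ : List S) (ω : ℕ → S) (f : ℕ → ℕ) : Prop where
  mono : ∀ i j, i < j → j < σ.length → f i < f j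
  agree : ∀ i : Fin σ.length, σ.get i = ω (f i.1)
  fresh : ∀ i < σ.length, ∀ j < f i, ¬ r (ω (f i)) (ω j)
  inertia : ∀ i, i + 1 < σ.length → ∀ j, f i < j → j < f (i + 1) → r (ω (f i)) (ω j)

/-- There is a path from `s` to `t` staying in the SCC of `s` until `t`. -/
def exitReach (P : S → S → ℝ≥0∞) (s t : S) : Prop :=
  ∃ l : List S, List.Chain (edge P) s (l ++ [t]) ∧ ∀ u ∈ s :: l, sccRel P s u

/-- The SCC of `s` has no output states. -/
def noOut (P : S → S → ℝ≥0∞) (s : S) : Prop :=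
  ∀ u t, sccRel P s u → edge P u t → sccRel P s t

/-- Edges of the acyclic reduction. -/
def AcEdge (P : S → S → ℝ≥0∞) (s t : S) : Prop :=
  (¬ nontriv P s ∧ edge P s t) ∨
  (nontriv P s ∧ ¬ sccRel P s t ∧ exitReach P s t) ∨
  (nontriv P s ∧ t = s ∧ noOut P s)

/-- States of the acyclic reduction: states outside nontrivial SCCs and input states. -/
def AcState (P : S → S → ℝ≥0∞) (s : S) : Prop :=
  ¬ nontriv P s ∨ ∃ t, ¬ sccRel P s t ∧ edge P t s

/-- A rail: a finite path of the acyclic reduction starting at `s0`. -/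
def IsRail (P : S → S → ℝ≥0∞) (s0 : S) (σ : List S) : Prop :=
  σ.head? = some s0 ∧ σ.Chain' (AcEdge P) ∧ ∀ x ∈ σ, AcState P x

/-- The torrent of a rail `σ`: infinite paths into which `σ` embeds. -/
def Torr (P : S → S → ℝ≥0∞) (r : S → S → Prop) (s0 : S) (σ : List S) : Set (ℕ → S) :=
  {ω | IsPath P s0 ω ∧ ∃ f, Embeds r σ ω f}

def toSeq (d : S) (ρ : List S) : ℕ → S := fun n => ρ.getD n d

/-- Torrent generators: finite paths `ρ` with an embedding of `σ` ending at the last state. -/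
def Gen (P : S → S → ℝ≥0∞) (r : S → S → Prop) (s0 : S) (σ : List S) : Set (List S) :=
  {ρ | IsFPath P s0 ρ ∧ ρ ≠ [] ∧ ∃ f, Embeds r σ (toSeq s0 ρ) f ∧
    (∀ i < σ.length, f i < ρ.length) ∧ f (σ.length - 1) = ρ.length - 1}

/-- Finite paths from `t` to `s` staying in the SCC of `t` except the final state `s`. -/
def ExitPaths (P : S → S → ℝ≥0∞) (t s : S) : Set (List S) :=
  {π | π.head? = some t ∧ (∃ h : π ≠ [], π.getLast h = s) ∧ π.Chain' (edge P) ∧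
    ∀ u ∈ π.dropLast, sccRel P t u}

/-- `M_ψ`: make absorbing all states of `A` and all states not reaching `A`. -/
noncomputable def absP (P : S → S → ℝ≥0∞) (A : Set S) : S → S → ℝ≥0∞ := fun s t =>
  if s ∈ A ∨ ¬ ∃ a ∈ A, Reach P s a then (if t = s then 1 else 0) else P s t

/-- Absorbing state. -/
def Absorbing (P : S → S → ℝ≥0∞) (s : S) : Prop :=
  P s s = 1 ∧ ∀ t, t ≠ s → P s t = 0

/-- Output states of the SCC of `k`. -/
def OutK (P : S → S → ℝ≥0∞) (k : S) : Set S :=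
  {t | ¬ sccRel P k t ∧ ∃ u, sccRel P k u ∧ edge P u t}

/-- The chain `M_K` of the SCC of `k`, with the output states made absorbing. -/
noncomputable def PK (P : S → S → ℝ≥0∞) (k : S) : S → S → ℝ≥0∞ := fun s t =>
  if sccRel P k s then P s t else (if t = s then 1 else 0)

/-- Absorbing state of the acyclic reduction: its only edge is a self-loop. -/
def AcAbsorbing (P : S → S → ℝ≥0∞) (s : S) : Prop :=
  AcEdge P s s ∧ ∀ t, AcEdge P s t → t = s


/-! The hypotheses give `μ` only on cylinders; still, they pin down `μ` on every event that
depends on a finite prefix of the path.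
A path of `M_K` that leaves `K` first lands in `Out_K`, where it is absorbed. Hence "eventually at
`t`" is the increasing union over `n` of "at `t` at time `n`", and for fixed `n` these are disjoint
prefix events: this gives the sum formula. If every state of `K` can exit `K`, there is a horizon
`m` and a `θ < 1` bounding, from every state, the probability of staying `m` steps in `K`; so
staying `m j` steps has probability at most `θ ^ j`. -/

section PathProb

variable {Q : S → S → ℝ≥0∞} {n : ℕ}

noncomputable def pathProb (Q : S → S → ℝ≥0∞) (f : Fin (n + 1) → S) : ℝ≥0∞ :=
  ∏ i : Fin n, Q (f i.castSucc) (f i.succ)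

lemma pathProb_cons (x : S) (g : Fin (n + 1) → S) :
    pathProb Q (Fin.cons x g : Fin (n + 2) → S) = Q x (g 0) * pathProb Q g := by
  simp [pathProb, Fin.prod_univ_succ]

lemma cylProb_ofFn (d : S) (f : Fin (n + 1) → S) :
    cylProb Q d (List.ofFn f) = pathProb Q f := by
  rw [cylProb, pathProb, List.length_ofFn, Nat.add_sub_cancel, ← Fin.prod_univ_eq_prod_range]
  refine Finset.prod_congr rfl fun i _ => ?_
  rw [List.getD_eq_getElem _ _ (by simp), List.getD_eq_getElem _ _ (by simp),
    List.getElem_ofFn, List.getElem_ofFn]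
  rfl

lemma mem_cyl_ofFn {f : Fin (n + 1) → S} {ω : ℕ → S} :
    ω ∈ Cyl (List.ofFn f) ↔ ∀ i : Fin (n + 1), ω i = f i := by
  simp only [Cyl, Set.mem_ofPred_eq, List.get_eq_getElem, List.getElem_ofFn]
  exact ⟨fun h i => h ⟨i, by simpa using i.2⟩, fun h i => h ⟨i, by simpa using i.2⟩⟩

lemma IsPath.isFPath_ofFn {s : S} {ω : ℕ → S} (hω : IsPath Q s ω) (n : ℕ) :
    IsFPath Q s (List.ofFn fun i : Fin (n + 1) => ω i) :=
  ⟨by simp [List.ofFn_succ, hω.1], List.isChain_ofFn.mpr fun i _ => hω.2 i⟩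

end PathProb

section StayProb

variable [Fintype S] {Q : S → S → ℝ≥0∞} {K : Set S}

noncomputable def stayProb (Q : S → S → ℝ≥0∞) (K : Set S) : ℕ → S → ℝ≥0∞
  | 0, u => if u ∈ K then 1 else 0
  | n + 1, u => if u ∈ K then ∑ v, Q u v * stayProb Q K n v else 0

lemma stayProb_of_notMem {u : S} (hu : u ∉ K) (n : ℕ) : stayProb Q K n u = 0 := by
  cases n <;> simp [stayProb, hu]

lemma sum_pathProb_eq_stayProb (n : ℕ) (u : S) :
    ∑ f : Fin (n + 1) → S with f 0 = u ∧ Set.range f ⊆ K, pathProb Q f = stayProb Q K n u := by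
  induction n generalizing u with
  | zero =>
    simp only [pathProb, Finset.univ_eq_empty, Finset.prod_empty, Finset.sum_const, nsmul_one,
      Set.range_subset_iff, Finset.card_filter]
    rw [← (Equiv.funUnique (Fin 1) S).symm.sum_comp]
    simp [stayProb, ite_and]
  | succ n ih =>
    have hcons : ∀ x (g : Fin (n + 1) → S), (Fin.consEquiv fun _ => S) (x, g) = Fin.cons x g :=
      fun _ _ => rfl
    rw [Finset.sum_filter]
    calc ∑ f : Fin (n + 2) → S, (if f 0 = u ∧ Set.range f ⊆ K then pathProb Q f else 0)
        = ∑ x, ∑ g : Fin (n + 1) → S,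
            if x = u ∧ x ∈ K ∧ Set.range g ⊆ K then Q x (g 0) * pathProb Q g else 0 := by
          rw [← (Fin.consEquiv fun _ => S).sum_comp, Fintype.sum_prod_type]
          simp only [hcons, Fin.cons_zero, Fin.range_cons, Set.insert_subset_iff, pathProb_cons]
      _ = if u ∈ K then ∑ g : Fin (n + 1) → S,
            if Set.range g ⊆ K then Q u (g 0) * pathProb Q g else 0 else 0 := by
          simp only [ite_and, Finset.sum_ite_irrel, Finset.sum_const_zero]
          rw [Finset.sum_ite_eq']
          simp
      _ = if u ∈ K then ∑ v, Q u v * ∑ g : Fin (n + 1) → S,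
            (if g 0 = v ∧ Set.range g ⊆ K then pathProb Q g else 0) else 0 := by
          simp only [Finset.mul_sum, mul_ite, mul_zero, ite_and]
          rw [Finset.sum_comm]
          simp
      _ = stayProb Q K (n + 1) u := by simp only [stayProb, ← ih, Finset.sum_filter]

lemma stayProb_add_le {b : ℕ} {θ : ℝ≥0∞} (hb : ∀ v, stayProb Q K b v ≤ θ) (a : ℕ) (u : S) :
    stayProb Q K (a + b) u ≤ stayProb Q K a u * θ := by
  induction a generalizing u with
  | zero =>
    by_cases hu : u ∈ K
    · simpa [stayProb, hu] using hb u
    · simp [stayProb_of_notMem hu]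
  | succ a ih =>
    rw [Nat.add_right_comm]
    unfold stayProb
    split_ifs
    · rw [Finset.sum_mul]
      refine Finset.sum_le_sum fun v _ => ?_
      rw [mul_assoc]
      gcongr
      exact ih v
    · simp

lemma stayProb_mul_le {b : ℕ} {θ : ℝ≥0∞} (hb : ∀ v, stayProb Q K b v ≤ θ) (j : ℕ) (u : S) :
    stayProb Q K (b * j) u ≤ θ ^ j := by
  induction j generalizing u with
  | zero => simp only [Nat.mul_zero, pow_zero, stayProb]; split_ifs <;> simp
  | succ j ih =>
    calc stayProb Q K (b * j + b) u ≤ stayProb Q K (b * j) u * θ := stayProb_add_le hb _ u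
      _ ≤ θ ^ (j + 1) := by rw [pow_succ]; gcongr; exact ih u

section Stochastic

variable (hQ : ∀ u, ∑ v, Q u v = 1)
include hQ

lemma stayProb_univ (n : ℕ) (u : S) : stayProb Q Set.univ n u = 1 := by
  induction n generalizing u with
  | zero => simp [stayProb]
  | succ n ih => simp [stayProb, ih, hQ u]

lemma sum_pathProb (n : ℕ) (u : S) : ∑ f : Fin (n + 1) → S with f 0 = u, pathProb Q f = 1 := by
  simpa using (sum_pathProb_eq_stayProb (Q := Q) (K := Set.univ) n u).trans (stayProb_univ hQ n u)

lemma stayProb_le_one (n : ℕ) (u : S) : stayProb Q K n u ≤ 1 := by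
  induction n generalizing u with
  | zero => unfold stayProb; split_ifs <;> simp
  | succ n ih =>
    unfold stayProb
    split_ifs
    · calc ∑ v, Q u v * stayProb Q K n v ≤ ∑ v, Q u v :=
          Finset.sum_le_sum fun v _ => mul_le_of_le_one_right' (ih v)
        _ = 1 := hQ u
    · exact zero_le_one

lemma stayProb_succ_le (n : ℕ) (u : S) : stayProb Q K (n + 1) u ≤ stayProb Q K n u := by
  induction n generalizing u with
  | zero =>
    by_cases hu : u ∈ K
    · simpa [stayProb, hu] using stayProb_le_one (K := K) hQ 1 u
    · simp [stayProb_of_notMem hu]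
  | succ n ih =>
    unfold stayProb
    split_ifs
    · gcongr with v; exact ih v
    · exact le_rfl

lemma stayProb_antitone (u : S) : Antitone fun n => stayProb Q K n u :=
  antitone_nat_of_succ_le fun n => stayProb_succ_le hQ n u

lemma stayProb_lt_one_of_edge {u v : S} (he : edge Q u v) {n : ℕ} (hv : stayProb Q K n v < 1) :
    stayProb Q K (n + 1) u < 1 := by
  by_cases hu : u ∈ K
  · have hQv : Q u v ≠ ⊤ := ne_top_of_le_ne_top ENNReal.one_ne_top
      (hQ u ▸ Finset.single_le_sum (fun _ _ => zero_le) (Finset.mem_univ v))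
    have hrest : ∑ w ∈ Finset.univ.erase v, Q u w ≠ ⊤ :=
      ne_top_of_le_ne_top ENNReal.one_ne_top
        (hQ u ▸ Finset.sum_le_sum_of_subset (Finset.erase_subset _ _))
    rw [stayProb, if_pos hu, ← Finset.add_sum_erase _ _ (Finset.mem_univ v), ← hQ u,
      ← Finset.add_sum_erase _ _ (Finset.mem_univ v)]
    have hle : ∑ w ∈ Finset.univ.erase v, Q u w * stayProb Q K n w
        ≤ ∑ w ∈ Finset.univ.erase v, Q u w :=
      Finset.sum_le_sum fun w _ => mul_le_of_le_one_right' (stayProb_le_one hQ n w)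
    refine ENNReal.add_lt_add_of_lt_of_le (ne_top_of_le_ne_top hrest hle) ?_ hle
    simpa using ENNReal.mul_lt_mul_right he.ne' hQv hv
  · simp [stayProb_of_notMem hu]

lemma exists_stayProb_lt_one {u t : S} (h : Reach Q u t) (ht : t ∉ K) :
    ∃ n, stayProb Q K n u < 1 := by
  induction h using Relation.ReflTransGen.head_induction_on with
  | refl => exact ⟨0, by simp [stayProb_of_notMem ht]⟩
  | head he _ ih =>
    obtain ⟨n, hn⟩ := ih
    exact ⟨n + 1, stayProb_lt_one_of_edge hQ he hn⟩

lemma iInf_stayProb_eq_zero (hexit : ∀ u ∈ K, ∃ t ∉ K, Reach Q u t) (u : S) :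
    ⨅ n, stayProb Q K n u = 0 := by
  have hlt : ∀ u, ∃ n, stayProb Q K n u < 1 := fun u => by
    by_cases hu : u ∈ K
    · obtain ⟨t, ht, hr⟩ := hexit u hu
      exact exists_stayProb_lt_one hQ hr ht
    · exact ⟨0, by simp [stayProb_of_notMem hu]⟩
  choose N hN using hlt
  set m := Finset.univ.sup N
  set θ := Finset.univ.sup (stayProb Q K m)
  have hθ : θ < 1 := (Finset.sup_lt_iff zero_lt_one).mpr fun v _ =>
    (stayProb_antitone hQ v (Finset.le_sup (Finset.mem_univ v))).trans_lt (hN v)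
  refine le_antisymm (ge_of_tendsto' (ENNReal.tendsto_pow_atTop_nhds_zero_of_lt_one hθ)
    fun j => (iInf_le _ (m * j)).trans ?_) zero_le
  exact stayProb_mul_le (fun v => Finset.le_sup (Finset.mem_univ v)) j u

end Stochastic

end StayProb

lemma Absorbing.eq_of_edge {Q : S → S → ℝ≥0∞} {t v : S} (ht : Absorbing Q t) (h : edge Q t v) :
    v = t := by
  by_contra hne
  exact (LT.lt.ne' h) (ht.2 v hne)

lemma IsPath.eq_of_absorbing {Q : S → S → ℝ≥0∞} {s : S} {ω : ℕ → S} (hω : IsPath Q s ω) {i j : ℕ}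
    (ht : Absorbing Q (ω i)) (hij : i ≤ j) : ω j = ω i := by
  induction j, hij using Nat.le_induction with
  | base => rfl
  | succ j _ ih =>
    rw [← ih] at ht ⊢
    exact ht.eq_of_edge (hω.2 j)

section PathMeasure

variable [MeasurableSpace S]

-- `d` is only the default value read by `cylProb` past the end of the list; it never matters.
structure IsPathMeasure (Q : S → S → ℝ≥0∞) (d s : S) (μ : Measure (ℕ → S)) : Prop where
  measure_cyl : ∀ ρ, IsFPath Q s ρ → μ (Cyl ρ) = cylProb Q d ρ
  ae_isPath : ∀ᵐ ω ∂μ, IsPath Q s ω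

namespace IsPathMeasure

variable {Q : S → S → ℝ≥0∞} {d s : S} {μ : Measure (ℕ → S)} (hμ : IsPathMeasure Q d s μ)
include hμ

lemma measure_cyl_ofFn_le {n : ℕ} (f : Fin (n + 1) → S) :
    μ (Cyl (List.ofFn f)) ≤ pathProb Q f := by
  by_cases hf : IsFPath Q s (List.ofFn f)
  · rw [hμ.measure_cyl _ hf, cylProb_ofFn]
  · have hsub : Cyl (List.ofFn f) ⊆ {ω | ¬ IsPath Q s ω} := fun ω hω hpath => hf <| by
      simpa only [← funext (mem_cyl_ofFn.mp hω)] using hpath.isFPath_ofFn n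
    exact (measure_mono_null hsub (ae_iff.mp hμ.ae_isPath)).trans_le zero_le

lemma monotone_measure_eval_eq {t : S} (ht : Absorbing Q t) :
    Monotone fun n => μ {ω | ω n = t} :=
  monotone_nat_of_le_succ fun n => measure_mono_ae <| hμ.ae_isPath.mono fun ω hω (hn : ω n = t) =>
    (hω.eq_of_absorbing (hn ▸ ht) n.le_succ).trans hn

lemma measure_exists_eq {t : S} (ht : Absorbing Q t) :
    μ {ω | ∃ i, ω i = t} = ⨆ n, μ {ω | ω n = t} := by
  have hacc : ∀ n, μ (Set.accumulate (fun i => {ω | ω i = t}) n) = μ {ω | ω n = t} := fun n =>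
    le_antisymm
      (measure_mono_ae <| hμ.ae_isPath.mono fun ω hω hmem => by
        obtain ⟨i, hi, hωi : ω i = t⟩ := Set.mem_accumulate.mp hmem
        exact (hω.eq_of_absorbing (hωi ▸ ht) hi).trans hωi)
      (measure_mono (Set.subset_accumulate (s := fun i => {ω : ℕ → S | ω i = t})))
  rw [Set.ofPred_exists, measure_iUnion_eq_iSup_accumulate]
  exact iSup_congr hacc

variable [Fintype S]

lemma measure_prefix_le {n : ℕ} (p : (Fin (n + 1) → S) → Prop) :
    μ {ω | p fun i => ω i} ≤ ∑ f with f 0 = s ∧ p f, pathProb Q f := by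
  calc μ {ω | p fun i => ω i}
      ≤ μ (⋃ f ∈ ({f | f 0 = s ∧ p f} : Finset (Fin (n + 1) → S)), Cyl (List.ofFn f)) := by
        refine measure_mono_ae (hμ.ae_isPath.mono fun ω hω hp => ?_)
        exact Set.mem_iUnion₂.mpr ⟨fun i => ω i,
          Finset.mem_filter.mpr ⟨Finset.mem_univ _, hω.1, hp⟩, mem_cyl_ofFn.mpr fun _ => rfl⟩
    _ ≤ ∑ f with f 0 = s ∧ p f, μ (Cyl (List.ofFn f)) := measure_biUnion_finset_le _ _
    _ ≤ ∑ f with f 0 = s ∧ p f, pathProb Q f :=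
        Finset.sum_le_sum fun f _ => hμ.measure_cyl_ofFn_le f

-- Only subadditivity is available (the events need not be measurable): the complementary
-- upper bounds add up to the total path mass `1`, which forces equality.
lemma measure_prefix [IsProbabilityMeasure μ] (hQ : ∀ u, ∑ v, Q u v = 1) {n : ℕ}
    (p : (Fin (n + 1) → S) → Prop) :
    μ {ω | p fun i => ω i} = ∑ f with f 0 = s ∧ p f, pathProb Q f := by
  refine le_antisymm (hμ.measure_prefix_le p) ?_
  have htotal :
      ∑ f with f 0 = s ∧ p f, pathProb Q f + ∑ f with f 0 = s ∧ ¬ p f, pathProb Q f = 1 := by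
    rw [← sum_pathProb hQ n s, ← Finset.sum_filter_add_sum_filter_not {f | f 0 = s} p,
      Finset.filter_filter, Finset.filter_filter]
  have hcompl : μ {ω | p fun i => ω i}ᶜ ≤ ∑ f with f 0 = s ∧ ¬ p f, pathProb Q f :=
    by rw [Set.compl_ofPred]; convert hμ.measure_prefix_le fun f => ¬ p f
  refine ENNReal.le_of_add_le_add_right (ne_top_of_le_ne_top ENNReal.one_ne_top
    (htotal ▸ le_add_self)) ?_
  calc ∑ f with f 0 = s ∧ p f, pathProb Q f + ∑ f with f 0 = s ∧ ¬ p f, pathProb Q f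
      = μ Set.univ := htotal.trans measure_univ.symm
    _ ≤ μ {ω | p fun i => ω i} + μ {ω | p fun i => ω i}ᶜ := measure_univ_le_add_compl _
    _ ≤ μ {ω | p fun i => ω i} + ∑ f with f 0 = s ∧ ¬ p f, pathProb Q f :=
        add_le_add le_rfl hcompl

lemma sum_measure_eval_eq [IsProbabilityMeasure μ] (hQ : ∀ u, ∑ v, Q u v = 1) (n : ℕ)
    (X : Finset S) : ∑ t ∈ X, μ {ω | ω n = t} = μ {ω | ω n ∈ X} := by
  have hmarg : ∀ q : S → Prop,
      μ {ω | q (ω n)} = ∑ f with f 0 = s ∧ q (f (Fin.last n)), pathProb Q f :=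
    fun q => hμ.measure_prefix hQ fun f => q (f (Fin.last n))
  rw [hmarg, Finset.sum_congr rfl fun t _ => hmarg (· = t)]
  simp only [Finset.sum_filter]
  rw [Finset.sum_comm]
  refine Finset.sum_congr rfl fun f _ => ?_
  simp only [ite_and, Finset.sum_ite_irrel, Finset.sum_const_zero, Finset.sum_ite_eq]
  congr

lemma measure_forall_mem_eq_zero {K : Set S} (hQ : ∀ u, ∑ v, Q u v = 1)
    (hexit : ∀ u ∈ K, ∃ t ∉ K, Reach Q u t) : μ {ω | ∀ i, ω i ∈ K} = 0 := by
  refine le_antisymm (le_iInf (fun n => ?_) |>.trans (iInf_stayProb_eq_zero hQ hexit s).le) zero_le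
  calc μ {ω | ∀ i, ω i ∈ K} ≤ μ {ω | Set.range (fun i : Fin (n + 1) => ω i) ⊆ K} :=
        measure_mono fun ω hω => Set.range_subset_iff.mpr fun i => hω i
    _ ≤ stayProb Q K n s := (hμ.measure_prefix_le _).trans_eq (sum_pathProb_eq_stayProb n s)

lemma measure_exists_notMem_eq_one [IsProbabilityMeasure μ] {K : Set S}
    (hQ : ∀ u, ∑ v, Q u v = 1) (hexit : ∀ u ∈ K, ∃ t ∉ K, Reach Q u t) :
    μ {ω | ∃ i, ω i ∉ K} = 1 := by
  refine (measure_congr (ae_eq_univ.mpr ?_)).trans measure_univ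
  simpa [Set.compl_ofPred] using hμ.measure_forall_mem_eq_zero hQ hexit

end IsPathMeasure

end PathMeasure

section SCC

variable {P : S → S → ℝ≥0∞} {k : S}

lemma PK_of_sccRel {u : S} (hu : sccRel P k u) : PK P k u = P u :=
  funext fun _ => if_pos hu

lemma absorbing_PK {u : S} (hu : ¬ sccRel P k u) : Absorbing (PK P k) u := by
  refine ⟨by simp [PK, hu], fun t ht => by simp [PK, hu, ht]⟩

lemma PK_row [Fintype S] (hrow : ∀ s, ∑ t, P s t = 1) (u : S) : ∑ t, PK P k u t = 1 := by
  by_cases hu : sccRel P k u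
  · rw [PK_of_sccRel hu, hrow]
  · simp [PK, hu]

lemma IsPath.mem_OutK {s : S} (hs : sccRel P k s) {ω : ℕ → S} (hω : IsPath (PK P k) s ω) {n : ℕ}
    (hn : ¬ sccRel P k (ω n)) : ω n ∈ OutK P k := by
  induction n with
  | zero => exact absurd (hω.1 ▸ hs) hn
  | succ n ih =>
    by_cases hK : sccRel P k (ω n)
    · have he := hω.2 n
      rw [edge, PK_of_sccRel hK] at he
      exact ⟨hn, ω n, hK, he⟩
    · rw [(absorbing_PK hK).eq_of_edge (hω.2 n)]
      exact ih hK

lemma exists_reach_PK_not_sccRel {u t : S} (h : Reach P u t) (hu : sccRel P k u)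
    (ht : ¬ sccRel P k t) : ∃ t' ∉ {x | sccRel P k x}, Reach (PK P k) u t' := by
  induction h using Relation.ReflTransGen.head_induction_on with
  | refl => exact absurd hu ht
  | @head a c hac _ ih =>
    have hac' : edge (PK P k) a c := by rwa [edge, PK_of_sccRel hu]
    by_cases hc : sccRel P k c
    · obtain ⟨t', ht', hr⟩ := ih hc
      exact ⟨t', ht', .head hac' hr⟩
    · exact ⟨c, hc, .single hac'⟩

variable [Fintype S] [MeasurableSpace S] {d s : S} {μ : Measure (ℕ → S)}

lemma IsPathMeasure.sum_measure_exists_eq_OutK [IsProbabilityMeasure μ]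
    (hμ : IsPathMeasure (PK P k) d s μ) (hrow : ∀ s, ∑ t, P s t = 1) (hs : sccRel P k s) :
    (∑ t, if t ∈ OutK P k then μ {ω | ∃ i, ω i = t} else 0)
      = μ {ω | ∃ i, ¬ sccRel P k (ω i)} := by
  have hmarg : ∀ n, (∑ t, if t ∈ OutK P k then μ {ω | ω n = t} else 0)
      ≤ μ {ω | ∃ i, ¬ sccRel P k (ω i)} := fun n => by
    rw [← Finset.sum_filter, hμ.sum_measure_eval_eq (PK_row hrow) n]
    exact measure_mono fun ω hω => ⟨n, (Finset.mem_filter.mp hω).2.1⟩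
  refine le_antisymm ?_ ?_
  · calc (∑ t, if t ∈ OutK P k then μ {ω | ∃ i, ω i = t} else 0)
        = ∑ t, ⨆ n, if t ∈ OutK P k then μ {ω | ω n = t} else 0 :=
          Finset.sum_congr rfl fun t _ => by
            split_ifs with ht
            · exact hμ.measure_exists_eq (absorbing_PK ht.1)
            · exact iSup_const.symm
      _ = ⨆ n, ∑ t, if t ∈ OutK P k then μ {ω | ω n = t} else 0 :=
          ENNReal.finsetSum_iSup_of_monotone fun t => by
            by_cases ht : t ∈ OutK P k
            · simpa only [ht, if_true] using hμ.monotone_measure_eval_eq (absorbing_PK ht.1)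
            · simpa only [ht, if_false] using monotone_const
      _ ≤ μ {ω | ∃ i, ¬ sccRel P k (ω i)} := iSup_le hmarg
  · calc μ {ω | ∃ i, ¬ sccRel P k (ω i)}
        ≤ μ (⋃ t ∈ ({t | t ∈ OutK P k} : Finset S), {ω | ∃ i, ω i = t}) :=
          measure_mono_ae <| hμ.ae_isPath.mono fun ω hω ⟨i, hi⟩ => Set.mem_iUnion₂.mpr
            ⟨ω i, Finset.mem_filter.mpr ⟨Finset.mem_univ _, hω.mem_OutK hs hi⟩, i, rfl⟩
      _ ≤ ∑ t ∈ ({t | t ∈ OutK P k} : Finset S), μ {ω | ∃ i, ω i = t} :=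
          measure_biUnion_finset_le _ _
      _ = ∑ t, if t ∈ OutK P k then μ {ω | ∃ i, ω i = t} else 0 := Finset.sum_filter _ _

end SCC

theorem scc_exit_probabilities_general [Fintype S] [MeasurableSpace S]
    (P : S → S → ℝ≥0∞) (hrow : ∀ s, ∑ t, P s t = 1)
    (k : S)
    (μ : S → Measure (ℕ → S)) (hprob : ∀ s, IsProbabilityMeasure (μ s))
    (hμ : ∀ s ρ, IsFPath (PK P k) s ρ → μ s (Cyl ρ) = cylProb (PK P k) k ρ)
    (hsupp : ∀ s, μ s {ω | ¬ IsPath (PK P k) s ω} = 0)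
    (s : S) (hs : sccRel P k s) :
    μ s {ω | (∃ i, ω i ∈ OutK P k) ∨ ∀ i, sccRel P k (ω i)} = 1 ∧
    (∑ t, if t ∈ OutK P k then μ s {ω | ∃ i, ω i = t} else 0)
      = μ s {ω | ∃ i, ¬ sccRel P k (ω i)} ∧
    ((OutK P k).Nonempty → (∀ u, sccRel P k u → ∃ t, ¬ sccRel P k t ∧ Reach P u t) →
      (∑ t, if t ∈ OutK P k then μ s {ω | ∃ i, ω i = t} else 0) = 1) := by
  have := hprob s
  have hμs : IsPathMeasure (PK P k) k s (μ s) := ⟨hμ s, ae_iff.mpr (hsupp s)⟩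
  have hexit_or_stay : ∀ᵐ ω ∂μ s, (∃ i, ω i ∈ OutK P k) ∨ ∀ i, sccRel P k (ω i) :=
    hμs.ae_isPath.mono fun ω hω => or_iff_not_imp_right.mpr fun hstay => by
      obtain ⟨i, hi⟩ := not_forall.mp hstay
      exact ⟨i, hω.mem_OutK hs hi⟩
  refine ⟨(measure_congr (ae_eq_univ.mpr hexit_or_stay)).trans measure_univ,
    hμs.sum_measure_exists_eq_OutK hrow hs, fun _ hexit => ?_⟩
  rw [hμs.sum_measure_exists_eq_OutK hrow hs]
  refine hμs.measure_exists_notMem_eq_one (K := {x | sccRel P k x}) (PK_row hrow) fun u hu => ?_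
  obtain ⟨t, ht, hr⟩ := hexit u hu
  exact exists_reach_PK_not_sccRel hr hu ht

/-- in `M_K` (SCC of `k` with absorbing outputs), from any `s ∈ K`,
almost surely a path reaches `Out_K` or stays in `K` forever; the probabilities of
reaching the several output states sum to the probability of ever leaving `K`; and
if `Out_K ≠ ∅` and every state of `K` can exit `K`, these probabilities sum to `1`. -/
theorem scc_exit_probabilities [Fintype S] [MeasurableSpace S]
    (P : S → S → ℝ≥0∞) (hrow : ∀ s, ∑ t, P s t = 1)
    (k : S) (hk : nontriv P k)
    (μ : S → Measure (ℕ → S)) (hprob : ∀ s, IsProbabilityMeasure (μ s))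
    (hμ : ∀ s ρ, IsFPath (PK P k) s ρ → μ s (Cyl ρ) = cylProb (PK P k) k ρ)
    (hsupp : ∀ s, μ s {ω | ¬ IsPath (PK P k) s ω} = 0)
    (s : S) (hs : sccRel P k s) :
    μ s {ω | (∃ i, ω i ∈ OutK P k) ∨ ∀ i, sccRel P k (ω i)} = 1 ∧
    (∑ t, if t ∈ OutK P k then μ s {ω | ∃ i, ω i = t} else 0)
      = μ s {ω | ∃ i, ¬ sccRel P k (ω i)} ∧
    ((OutK P k).Nonempty → (∀ u, sccRel P k u → ∃ t, ¬ sccRel P k t ∧ Reach P u t) →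
      (∑ t, if t ∈ OutK P k then μ s {ω | ∃ i, ω i = t} else 0) = 1) :=
  scc_exit_probabilities_general P hrow k μ hprob hμ hsupp s hs

end CE
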